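/- Let ⟨[0,1], ⊕_p⟩ be a convex algebra satisfying (MO), (UC) and (LC), and let (a,b) ∈ Δ^⊕. Then there exists a unique τ ∈ {1, ∞} such that the interval [a,b) is closed under the operations ⊕_p and ⟨[a,b), ⊕_p⟩ is isomorphic to ⟨[0,τ), +_p⟩, where x +_p y = px + (1−p)y; i.e. there is a bijection Φ : [0,τ) → [a,b) with Φ(s +_p t) = Φ(s) ⊕_p Φ(t) for all s, t ∈ [0,τ) and p ∈ (0,1). Moreover, every such isomorphism is strictly increasing, and if τ = 1 the isomorphism is unique. -/

import Mathlib

/-!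
For `y ∈ (a, b)` the map `f t = y ⊕_t a` is an isomorphism of `⟨[0, 1), +_p⟩` onto
`⟨[a, y), ⊕_p⟩`. It respects convex combinations by associativity. It is strictly increasing
because of the gap: `y ⊕_p a = y` would make `f` invariant under `t ↦ p t`, hence constant, so
`y ⊳ a ⊳ 0` and `y ∈ E^⊕`; and since `y ⊕_q a = y ⊕_α (y ⊕_p a)` for `p < q`, a flat piece of
`f` gives `y ⊕_α w = w` with `w < y`, which (LC) excludes in the same way. It is onto because of
(UC): the infimum `V_{x,y}` of the `y ⊕_p x` eats `x`, so inside the gap it equals `x`, which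
makes `f` continuous.

The inverse coordinates for different `y` agree up to a factor, so after normalising at the
midpoint they glue to a strictly increasing `Θ : [a, b) → ℝ` turning `⊕_p` into `+_p`. Its image
is down-closed without a largest element, i.e. `[0, T)`; take `τ = ∞` if `T = ∞` and `τ = 1`
otherwise. For any isomorphism `Φ` from `[0, τ)`, `Θ ∘ Φ` is a bijection `[0, τ) → [0, T)`
respecting convex combinations, hence `s ↦ κ s` with `T = κ τ`. This gives the uniqueness of `τ`,
the monotonicity of `Φ`, and for `τ = 1` the uniqueness of `Φ`.
-/

open Set Filter Topology

/-- A convex algebra on the interval `[0,1] ⊆ ℝ`: `op p x y` denotes `x ⊕_p y`,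
for `p ∈ (0,1)`, extended to `p ∈ [0,1]` by the projection axioms
`x ⊕_1 y = x` and `x ⊕_0 y = y`.  All axioms are required only on `[0,1]`;
values of `op` outside `[0,1]` are irrelevant. -/
structure UCA where
  op : ℝ → ℝ → ℝ → ℝ
  mem : ∀ p ∈ Set.Icc (0:ℝ) 1, ∀ x ∈ Set.Icc (0:ℝ) 1, ∀ y ∈ Set.Icc (0:ℝ) 1,
      op p x y ∈ Set.Icc (0:ℝ) 1
  idem : ∀ p ∈ Set.Ioo (0:ℝ) 1, ∀ x ∈ Set.Icc (0:ℝ) 1, op p x x = x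
  comm : ∀ p ∈ Set.Ioo (0:ℝ) 1, ∀ x ∈ Set.Icc (0:ℝ) 1, ∀ y ∈ Set.Icc (0:ℝ) 1,
      op p x y = op (1 - p) y x
  assoc : ∀ p ∈ Set.Ioo (0:ℝ) 1, ∀ q ∈ Set.Ioo (0:ℝ) 1,
      ∀ x ∈ Set.Icc (0:ℝ) 1, ∀ y ∈ Set.Icc (0:ℝ) 1, ∀ z ∈ Set.Icc (0:ℝ) 1,
      op q (op p x y) z = op (p * q) x (op ((1 - p) * q / (1 - p * q)) y z)
  proj1 : ∀ x ∈ Set.Icc (0:ℝ) 1, ∀ y ∈ Set.Icc (0:ℝ) 1, op 1 x y = x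
  proj0 : ∀ x ∈ Set.Icc (0:ℝ) 1, ∀ y ∈ Set.Icc (0:ℝ) 1, op 0 x y = y

/-- Monotonicity (MO): `x ≤ x'` implies `x ⊕_p y ≤ x' ⊕_p y`. -/
def UCA.MO (A : UCA) : Prop :=
  ∀ x ∈ Set.Icc (0:ℝ) 1, ∀ x' ∈ Set.Icc (0:ℝ) 1, ∀ y ∈ Set.Icc (0:ℝ) 1,
    ∀ p ∈ Set.Ioo (0:ℝ) 1, x ≤ x' → A.op p x y ≤ A.op p x' y

/-- (UC): for `x, y ∈ [0,1)` and `p ∈ (0,1)`,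
`limsup_{ε→0⁺} ((x+ε) ⊕_p (y+ε)) ≤ x ⊕_p y`. -/
def UCA.UC (A : UCA) : Prop :=
  ∀ x ∈ Set.Ico (0:ℝ) 1, ∀ y ∈ Set.Ico (0:ℝ) 1, ∀ p ∈ Set.Ioo (0:ℝ) 1,
    Filter.limsup (fun ε => A.op p (x + ε) (y + ε)) (𝓝[>] (0:ℝ)) ≤ A.op p x y

/-- (LC): for `x ≤ y` in `[0,1]`, `liminf_{p→1⁻} (y ⊕_p x) ≥ y`. -/
def UCA.LC (A : UCA) : Prop :=
  ∀ x ∈ Set.Icc (0:ℝ) 1, ∀ y ∈ Set.Icc (0:ℝ) 1, x ≤ y →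
    y ≤ Filter.liminf (fun p => A.op p y x) (𝓝[<] (1:ℝ))

/-- `y ⊳ x` : `y` eats `x`, i.e. `y ⊕_t x = y` for all `t ∈ (0,1]`. -/
def UCA.Eats (A : UCA) (y x : ℝ) : Prop :=
  ∀ t ∈ Set.Ioc (0:ℝ) 1, A.op t y x = y

/-- `E^⊕ = { y ∈ [0,1] : y ⊳ 0 }`. -/
def UCA.E (A : UCA) : Set ℝ := {y ∈ Set.Icc (0:ℝ) 1 | A.Eats y 0}

/-- `V_{x,y} = inf { y ⊕_p x : p ∈ (0,1] }`. -/
noncomputable def UCA.V (A : UCA) (x y : ℝ) : ℝ :=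
  sInf ((fun p => A.op p y x) '' Set.Ioc (0:ℝ) 1)

/-- The interval `[0, τ)` for `τ ∈ {1, ∞}` (encoded in `ℝ≥0∞`):
`{t : ℝ | 0 ≤ t, t < τ}`. -/
def tauSet (τ : ENNReal) : Set ℝ := {t : ℝ | 0 ≤ t ∧ ENNReal.ofReal t < τ}

/-- `Φ` is an isomorphism of `⟨[0,τ), +_p⟩` (operations induced by linear combinations)
onto `⟨[a,b), ⊕_p⟩`: a bijection of `[0,τ)` onto `[a,b)` with
`Φ(s +_p t) = Φ(s) ⊕_p Φ(t)`. -/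
def UCA.IsTauIso (A : UCA) (a b : ℝ) (τ : ENNReal) (Φ : ℝ → ℝ) : Prop :=
  Set.BijOn Φ (tauSet τ) (Set.Ico a b) ∧
  ∀ p ∈ Set.Ioo (0:ℝ) 1, ∀ s ∈ tauSet τ, ∀ t ∈ tauSet τ,
    Φ (p * s + (1 - p) * t) = A.op p (Φ s) (Φ t)

/-- `(a,b) ∈ Δ^⊕`: `a, b ∈ E^⊕`, `a < b`, and `(a,b) ∩ E^⊕ = ∅`. -/
def UCA.Delta (A : UCA) (a b : ℝ) : Prop :=
  a ∈ A.E ∧ b ∈ A.E ∧ a < b ∧ Set.Ioo a b ∩ A.E = ∅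

lemma tauSet_one : tauSet 1 = Ico (0:ℝ) 1 := by
  ext t
  simp only [tauSet, mem_ofPred_eq, mem_Ico, and_congr_right_iff]
  intro ht
  rw [← ENNReal.ofReal_one, ENNReal.ofReal_lt_ofReal_iff_of_nonneg ht]

lemma zero_mem_tauSet {τ : ENNReal} (hτ : τ ≠ 0) : (0:ℝ) ∈ tauSet τ :=
  ⟨le_rfl, by rw [ENNReal.ofReal_zero]; exact pos_iff_ne_zero.2 hτ⟩

lemma ne_zero_of_mem_tauSet {τ : ENNReal} {s : ℝ} (hs : s ∈ tauSet τ) : τ ≠ 0 :=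
  (zero_le.trans_lt hs.2).ne'

lemma exists_gt_mem_tauSet {τ : ENNReal} {s : ℝ} (hs : s ∈ tauSet τ) :
    ∃ t ∈ tauSet τ, s < t := by
  obtain ⟨t, ht0, hst, htτ⟩ := ENNReal.lt_iff_exists_real_btwn.1 hs.2
  exact ⟨t, ⟨ht0, htτ⟩, (ENNReal.ofReal_lt_ofReal_iff'.1 hst).1⟩

lemma convex_tauSet (τ : ENNReal) : Convex ℝ (tauSet τ) :=
  OrdConnected.convex ⟨fun _ hs _ ht _ hu =>
    ⟨hs.1.trans hu.1, (ENNReal.ofReal_le_ofReal hu.2).trans_lt ht.2⟩⟩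

lemma comb_mem_tauSet {τ : ENNReal} {p s t : ℝ} (hp : p ∈ Ioo (0:ℝ) 1)
    (hs : s ∈ tauSet τ) (ht : t ∈ tauSet τ) : p * s + (1 - p) * t ∈ tauSet τ :=
  convex_tauSet τ hs ht hp.1.le (by linarith [hp.2]) (by ring)

lemma tauSet_injective : Function.Injective tauSet := by
  intro σ τ h
  by_contra hne
  wlog hlt : σ < τ generalizing σ τ
  · exact this h.symm (Ne.symm hne) ((Ne.symm hne).lt_of_le (not_lt.1 hlt))
  have hσ : σ ≠ ⊤ := hlt.ne_top
  have hmem : σ.toReal ∈ tauSet τ :=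
    ⟨ENNReal.toReal_nonneg, by rwa [ENNReal.ofReal_toReal hσ]⟩
  rw [← h] at hmem
  exact (ENNReal.ofReal_toReal hσ ▸ hmem.2).false

lemma image_mul_tauSet {κ : ℝ} (hκ : 0 < κ) (τ : ENNReal) :
    (κ * ·) '' tauSet τ = tauSet (ENNReal.ofReal κ * τ) := by
  have hκ0 : ENNReal.ofReal κ ≠ 0 := by simpa using hκ
  ext t
  constructor
  · rintro ⟨s, ⟨hs0, hsτ⟩, rfl⟩
    refine ⟨mul_nonneg hκ.le hs0, ?_⟩
    rw [ENNReal.ofReal_mul hκ.le]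
    exact (ENNReal.mul_lt_mul_iff_right hκ0 ENNReal.ofReal_ne_top).2 hsτ
  · rintro ⟨ht0, htτ⟩
    refine ⟨t / κ, ⟨div_nonneg ht0 hκ.le, ?_⟩, mul_div_cancel₀ t hκ.ne'⟩
    rwa [← ENNReal.mul_lt_mul_iff_right hκ0 ENNReal.ofReal_ne_top, ← ENNReal.ofReal_mul hκ.le,
      mul_div_cancel₀ t hκ.ne']

lemma exists_tauSet_eq {S : Set ℝ} (hnonneg : ∀ r ∈ S, 0 ≤ r)
    (hdown : ∀ r ∈ S, ∀ r', 0 ≤ r' → r' < r → r' ∈ S) (hup : ∀ r ∈ S, ∃ r' ∈ S, r < r') :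
    ∃ T, S = tauSet T := by
  refine ⟨sSup (ENNReal.ofReal '' S), Set.ext fun r => ⟨fun hr => ?_, fun ⟨hr0, hrT⟩ => ?_⟩⟩
  · obtain ⟨r', hr', hrr'⟩ := hup r hr
    exact ⟨hnonneg r hr, ((ENNReal.ofReal_lt_ofReal_iff_of_nonneg (hnonneg r hr)).2 hrr').trans_le
      (le_sSup (mem_image_of_mem _ hr'))⟩
  · obtain ⟨_, ⟨r', hr', rfl⟩, hlt⟩ := lt_sSup_iff.1 hrT
    exact hdown r' hr' r hr0 (ENNReal.ofReal_lt_ofReal_iff'.1 hlt).1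

lemma exists_affine_of_comb {D : Set ℝ} {G : ℝ → ℝ} (h0 : 0 ∈ D) (hD : ∀ s ∈ D, 0 ≤ s)
    (hG : ∀ p ∈ Ioo (0:ℝ) 1, ∀ s ∈ D, ∀ t ∈ D,
      G (p * s + (1 - p) * t) = p * G s + (1 - p) * G t) :
    ∃ κ, ∀ s ∈ D, G s = G 0 + κ * s := by
  have slope : ∀ s t, 0 < s → s < t → t ∈ D → (G s - G 0) * t = (G t - G 0) * s := by
    intro s t hs hst ht
    have ht0 : 0 < t := hs.trans hst
    have h := hG (s / t) ⟨div_pos hs ht0, (div_lt_one ht0).2 hst⟩ t ht 0 h0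
    rw [mul_zero, add_zero, div_mul_cancel₀ s ht0.ne'] at h
    rw [h]
    field_simp
    ring
  by_cases hpos : ∃ t₀ ∈ D, 0 < t₀
  · obtain ⟨t₀, ht₀, ht₀pos⟩ := hpos
    refine ⟨(G t₀ - G 0) / t₀, fun s hs => ?_⟩
    rcases (hD s hs).eq_or_lt with rfl | hs0
    · ring
    have key : (G s - G 0) * t₀ = (G t₀ - G 0) * s := by
      rcases lt_trichotomy s t₀ with hlt | rfl | hgt
      · exact slope s t₀ hs0 hlt ht₀
      · rfl
      · exact (slope t₀ s ht₀pos hgt hs).symm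
    field_simp
    linarith
  · push Not at hpos
    exact ⟨0, fun s hs => by rw [le_antisymm (hpos s hs) (hD s hs)]; ring⟩

lemma exists_eq_mul_of_comb {G : ℝ → ℝ} {τ σ : ENNReal} (hτ : τ ≠ 0)
    (himage : G '' tauSet τ = tauSet σ)
    (hG : ∀ p ∈ Ioo (0:ℝ) 1, ∀ s ∈ tauSet τ, ∀ t ∈ tauSet τ,
      G (p * s + (1 - p) * t) = p * G s + (1 - p) * G t) :
    ∃ κ > 0, ∀ s ∈ tauSet τ, G s = κ * s := by
  have h0 := zero_mem_tauSet hτ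
  have hmaps : MapsTo G (tauSet τ) (tauSet σ) := himage ▸ mapsTo_image G _
  have hsurj : SurjOn G (tauSet τ) (tauSet σ) := himage ▸ surjOn_image G _
  obtain ⟨κ, hκ⟩ := exists_affine_of_comb h0 (fun s hs => hs.1) hG
  have hκpos : 0 < κ := by
    obtain ⟨r, hr, hGr⟩ := exists_gt_mem_tauSet (hmaps h0)
    obtain ⟨s, hs, rfl⟩ := hsurj hr
    rw [hκ s hs] at hGr
    by_contra! hκ0
    nlinarith [hs.1]
  have hG0 : G 0 = 0 := by
    obtain ⟨s₀, hs₀, hGs₀⟩ := hsurj (zero_mem_tauSet (ne_zero_of_mem_tauSet (hmaps h0)))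
    rw [hκ s₀ hs₀] at hGs₀
    nlinarith [(hmaps h0).1, hs₀.1]
  exact ⟨κ, hκpos, fun s hs => by rw [hκ s hs, hG0, zero_add]⟩

lemma MonotoneOn.eq_of_map_mul_eq {α : Type*} [PartialOrder α] {f : ℝ → α} {ρ : ℝ}
    (hf : MonotoneOn f (Ioo 0 1)) (hρ : ρ ∈ Ioo (0:ℝ) 1)
    (h : ∀ β ∈ Ioo (0:ℝ) 1, f (ρ * β) = f β) {β q : ℝ} (hβ : β ∈ Ioo (0:ℝ) 1)
    (hq : q ∈ Ioo (0:ℝ) 1) : f β = f q := by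
  suffices key : ∀ β ∈ Ioo (0:ℝ) 1, ∀ q ∈ Ioo (0:ℝ) 1, f β ≤ f q from
    le_antisymm (key β hβ q hq) (key q hq β hβ)
  intro β hβ q hq
  have hpow : ∀ n : ℕ, ρ ^ n * β ∈ Ioo (0:ℝ) 1 ∧ f (ρ ^ n * β) = f β := by
    intro n
    induction n with
    | zero => simpa using hβ
    | succ n ih =>
      rw [pow_succ', mul_assoc, h _ ih.1]
      exact ⟨⟨mul_pos hρ.1 ih.1.1, by nlinarith [ih.1.2, hρ.2, ih.1.1]⟩, ih.2⟩
  obtain ⟨n, hn⟩ := exists_pow_lt_of_lt_one hq.1 hρ.2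
  rw [← (hpow n).2]
  exact hf (hpow n).1 hq (by nlinarith [hβ.2, pow_pos hρ.1 n])

lemma exists_mem_Ioo_gt {a b x : ℝ} (hx : x ∈ Ico a b) :
    ∃ y ∈ Ioo a b, x < y ∧ (a + b) / 2 < y := by
  have hab : a < b := hx.1.trans_lt hx.2
  have h1 := le_max_left x ((a + b) / 2)
  have h2 := le_max_right x ((a + b) / 2)
  have h3 : max x ((a + b) / 2) < b := max_lt hx.2 (by linarith)
  exact ⟨(max x ((a + b) / 2) + b) / 2, ⟨by linarith, by linarith⟩, by linarith, by linarith⟩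

namespace UCA

section Algebra

variable (A : UCA)

lemma op_mem {p x y : ℝ} (hp : p ∈ Ioo (0:ℝ) 1) (hx : x ∈ Icc (0:ℝ) 1)
    (hy : y ∈ Icc (0:ℝ) 1) : A.op p x y ∈ Icc (0:ℝ) 1 :=
  A.mem p (Ioo_subset_Icc_self hp) x hx y hy

lemma op_le_op_right (hMO : A.MO) {p x y y' : ℝ} (hp : p ∈ Ioo (0:ℝ) 1)
    (hx : x ∈ Icc (0:ℝ) 1) (hy : y ∈ Icc (0:ℝ) 1) (hy' : y' ∈ Icc (0:ℝ) 1) (h : y ≤ y') :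
    A.op p x y ≤ A.op p x y' := by
  rw [A.comm p hp x hx y hy, A.comm p hp x hx y' hy']
  exact hMO y hy y' hy' x hx (1 - p) ⟨by linarith [hp.2], by linarith [hp.1]⟩ h

lemma min_le_op (hMO : A.MO) {p x y : ℝ} (hp : p ∈ Ioo (0:ℝ) 1)
    (hx : x ∈ Icc (0:ℝ) 1) (hy : y ∈ Icc (0:ℝ) 1) : min x y ≤ A.op p x y := by
  have hm : min x y ∈ Icc (0:ℝ) 1 := ⟨le_min hx.1 hy.1, (min_le_left _ _).trans hx.2⟩
  calc min x y = A.op p (min x y) (min x y) := (A.idem p hp _ hm).symm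
    _ ≤ A.op p x (min x y) := hMO _ hm x hx _ hm p hp (min_le_left _ _)
    _ ≤ A.op p x y := A.op_le_op_right hMO hp hx hm hy (min_le_right _ _)

lemma op_le_max (hMO : A.MO) {p x y : ℝ} (hp : p ∈ Ioo (0:ℝ) 1)
    (hx : x ∈ Icc (0:ℝ) 1) (hy : y ∈ Icc (0:ℝ) 1) : A.op p x y ≤ max x y := by
  have hm : max x y ∈ Icc (0:ℝ) 1 := ⟨hx.1.trans (le_max_left _ _), max_le hx.2 hy.2⟩
  calc A.op p x y ≤ A.op p (max x y) y := hMO x hx _ hm y hy p hp (le_max_left _ _)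
    _ ≤ A.op p (max x y) (max x y) := A.op_le_op_right hMO hp hm hy hm (le_max_right _ _)
    _ = max x y := A.idem p hp _ hm

lemma le_op_of_le (hMO : A.MO) {p x z : ℝ} (hp : p ∈ Ioo (0:ℝ) 1)
    (hx : x ∈ Icc (0:ℝ) 1) (hz : z ∈ Icc (0:ℝ) 1) (hzx : z ≤ x) : z ≤ A.op p x z := by
  simpa only [min_eq_right hzx] using A.min_le_op hMO hp hx hz

lemma op_le_of_le (hMO : A.MO) {p x z : ℝ} (hp : p ∈ Ioo (0:ℝ) 1)
    (hx : x ∈ Icc (0:ℝ) 1) (hz : z ∈ Icc (0:ℝ) 1) (hzx : z ≤ x) : A.op p x z ≤ x := by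
  simpa only [max_eq_left hzx] using A.op_le_max hMO hp hx hz

lemma op_mem_Ico (hMO : A.MO) {a b p x y : ℝ} (ha : 0 ≤ a) (hb : b ≤ 1)
    (hp : p ∈ Ioo (0:ℝ) 1) (hx : x ∈ Ico a b) (hy : y ∈ Ico a b) : A.op p x y ∈ Ico a b :=
  have hx' : x ∈ Icc (0:ℝ) 1 := ⟨ha.trans hx.1, hx.2.le.trans hb⟩
  have hy' : y ∈ Icc (0:ℝ) 1 := ⟨ha.trans hy.1, hy.2.le.trans hb⟩
  ⟨(le_min hx.1 hy.1).trans (A.min_le_op hMO hp hx' hy'),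
    (A.op_le_max hMO hp hx' hy').trans_lt (max_lt hx.2 hy.2)⟩

lemma op_op_left {α β x z : ℝ} (hα : α ∈ Ioo (0:ℝ) 1) (hβ : β ∈ Ico (0:ℝ) 1)
    (hx : x ∈ Icc (0:ℝ) 1) (hz : z ∈ Icc (0:ℝ) 1) :
    A.op α x (A.op β x z) = A.op (α + β * (1 - α)) x z := by
  rcases hβ.1.eq_or_lt with rfl | hβ0
  · rw [A.proj0 x hx z hz, zero_mul, add_zero]
  obtain ⟨q, hqdef⟩ : ∃ q, q = α + β * (1 - α) := ⟨_, rfl⟩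
  rw [← hqdef]
  have hq : q ∈ Ioo (0:ℝ) 1 := by
    rw [hqdef]
    constructor <;> nlinarith [hα.1, mul_pos (sub_pos.2 hα.2) (sub_pos.2 hβ.2),
      mul_pos hβ0 (sub_pos.2 hα.2)]
  have hαq : α / q ∈ Ioo (0:ℝ) 1 :=
    ⟨div_pos hα.1 hq.1, (div_lt_one hq.1).2 (by nlinarith [hα.2])⟩
  have h := A.assoc (α / q) hαq q hq x hx x hx z hz
  rw [A.idem _ hαq x hx, div_mul_cancel₀ _ hq.1.ne'] at h
  have hβq : (1 - α / q) * q / (1 - α) = β := by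
    rw [sub_mul, one_mul, div_mul_cancel₀ α hq.1.ne', hqdef, add_sub_cancel_left,
      mul_div_cancel_right₀ _ (sub_pos.2 hα.2).ne']
  rw [h, hβq]

lemma op_op_right {α β x z : ℝ} (hα : α ∈ Icc (0:ℝ) 1) (hβ : β ∈ Ioo (0:ℝ) 1)
    (hx : x ∈ Icc (0:ℝ) 1) (hz : z ∈ Icc (0:ℝ) 1) :
    A.op β (A.op α x z) z = A.op (α * β) x z := by
  rcases eq_endpoints_or_mem_Ioo_of_mem_Icc hα with rfl | rfl | hα
  · rw [A.proj0 x hx z hz, zero_mul, A.proj0 x hx z hz, A.idem β hβ z hz]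
  · rw [A.proj1 x hx z hz, one_mul]
  have hαβ : (0:ℝ) < 1 - α * β := by nlinarith [hα.1, hα.2, hβ.2]
  have hc : (1 - α) * β / (1 - α * β) ∈ Ioo (0:ℝ) 1 :=
    ⟨div_pos (by nlinarith [hα.2, hβ.1]) hαβ, (div_lt_one hαβ).2 (by nlinarith [hβ.2, hα.1])⟩
  rw [A.assoc α hα β hβ x hx z hz z hz, A.idem _ hc z hz]

lemma op_op_op {p s t x z : ℝ} (hp : p ∈ Ioo (0:ℝ) 1) (hs : s ∈ Ico (0:ℝ) 1)
    (ht : t ∈ Ico (0:ℝ) 1) (hx : x ∈ Icc (0:ℝ) 1) (hz : z ∈ Icc (0:ℝ) 1) :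
    A.op p (A.op s x z) (A.op t x z) = A.op (p * s + (1 - p) * t) x z := by
  have hp' : 1 - p ∈ Ioo (0:ℝ) 1 := ⟨by linarith [hp.2], by linarith [hp.1]⟩
  rcases hs.1.eq_or_lt with rfl | hs0
  · rw [A.proj0 x hx z hz, A.comm p hp z hz _ (A.mem t (Ico_subset_Icc_self ht) x hx z hz),
      A.op_op_right (Ico_subset_Icc_self ht) hp' hx hz]
    congr 1
    ring
  rcases ht.1.eq_or_lt with rfl | ht0
  · rw [A.proj0 x hx z hz, A.op_op_right (Ico_subset_Icc_self hs) hp hx hz]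
    congr 1
    ring
  have hs' : s ∈ Ioo (0:ℝ) 1 := ⟨hs0, hs.2⟩
  have hB : A.op t x z ∈ Icc (0:ℝ) 1 := A.mem t (Ico_subset_Icc_self ht) x hx z hz
  have hsp : (0:ℝ) < 1 - s * p := by nlinarith [hs.2, hp.2]
  obtain ⟨c, hcdef⟩ : ∃ c, c = (1 - s) * p / (1 - s * p) := ⟨_, rfl⟩
  have hc : c ∈ Ioo (0:ℝ) 1 := hcdef ▸
    ⟨div_pos (by nlinarith [hs.2, hp.1]) hsp, (div_lt_one hsp).2 (by nlinarith [hp.2])⟩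
  have hc' : 1 - c ∈ Ioo (0:ℝ) 1 := ⟨by linarith [hc.2], by linarith [hc.1]⟩
  have hsp' : s * p ∈ Ioo (0:ℝ) 1 := ⟨mul_pos hs0 hp.1, by nlinarith [hs.2, hp.2]⟩
  have htc : t * (1 - c) ∈ Ico (0:ℝ) 1 := ⟨by nlinarith [hc'.1], by nlinarith [ht.2, hc'.2]⟩
  rw [A.assoc s hs' p hp x hx z hz _ hB, ← hcdef, A.comm c hc z hz _ hB,
    A.op_op_right (Ico_subset_Icc_self ht) hc' hx hz, A.op_op_left hsp' htc hx hz]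
  have hc_mul : c * (1 - s * p) = (1 - s) * p := by rw [hcdef]; field_simp
  congr 1
  linear_combination (-t) * hc_mul

lemma monotoneOn_op (hMO : A.MO) {x z : ℝ} (hzx : z ≤ x) (hx : x ∈ Icc (0:ℝ) 1)
    (hz : z ∈ Icc (0:ℝ) 1) : MonotoneOn (fun t => A.op t x z) (Ioo 0 1) := by
  intro s hs s' hs' hss
  rcases hss.eq_or_lt with rfl | hlt
  · rfl
  have hq : s / s' ∈ Ioo (0:ℝ) 1 := ⟨div_pos hs.1 hs'.1, (div_lt_one hs'.1).2 hlt⟩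
  have hw := A.op_mem hs' hx hz
  calc A.op s x z = A.op (s / s') (A.op s' x z) z := by
        rw [A.op_op_right (Ioo_subset_Icc_self hs') hq hx hz, mul_div_cancel₀ s hs'.1.ne']
    _ ≤ A.op s' x z := A.op_le_of_le hMO hq hw hz (A.le_op_of_le hMO hs' hx hz hzx)

lemma eats_of_op_eq_left (hMO : A.MO) {p x z : ℝ} (hzx : z ≤ x) (hx : x ∈ Icc (0:ℝ) 1)
    (hz : z ∈ Icc (0:ℝ) 1) (hp : p ∈ Ioo (0:ℝ) 1) (h : A.op p x z = x) : A.Eats x z := by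
  intro t ht
  rcases ht.2.eq_or_lt with rfl | ht1
  · exact A.proj1 x hx z hz
  refine ((A.monotoneOn_op hMO hzx hx hz).eq_of_map_mul_eq hp (fun β hβ => ?_) ⟨ht.1, ht1⟩
    hp).trans h
  rw [← A.op_op_right (Ioo_subset_Icc_self hp) hβ hx hz, h]

lemma exists_sub_lt_op (hLC : A.LC) {x z ε : ℝ} (hzx : z ≤ x) (hx : x ∈ Icc (0:ℝ) 1)
    (hz : z ∈ Icc (0:ℝ) 1) (hε : 0 < ε) : ∃ p ∈ Ioo (0:ℝ) 1, x - ε < A.op p x z := by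
  by_contra! hcon
  have hIoo : Ioo (0:ℝ) 1 ∈ 𝓝[<] (1:ℝ) := Ioo_mem_nhdsLT zero_lt_one
  have hbdd : IsBoundedUnder (· ≥ ·) (𝓝[<] (1:ℝ)) (fun p => A.op p x z) :=
    isBoundedUnder_of_eventually_ge (eventually_of_mem hIoo fun p hp => (A.op_mem hp hx hz).1)
  linarith [hLC z hz x hx hzx,
    liminf_le_of_frequently_le (eventually_of_mem hIoo hcon).frequently hbdd]

lemma eq_of_op_eq_right (hMO : A.MO) (hLC : A.LC) {α x z : ℝ} (hzx : z ≤ x)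
    (hx : x ∈ Icc (0:ℝ) 1) (hz : z ∈ Icc (0:ℝ) 1) (hα : α ∈ Ioo (0:ℝ) 1)
    (h : A.op α x z = z) : z = x := by
  have hα' : 1 - α ∈ Ioo (0:ℝ) 1 := ⟨by linarith [hα.2], by linarith [hα.1]⟩
  -- `β ↦ z ⊕_β x` is antitone and invariant under `β ↦ (1 - α) β`, hence constant,
  -- and (LC) pushes the constant up to `x`
  have hflip : ∀ β ∈ Ioo (0:ℝ) 1, A.op β z x = A.op (1 - β) x z := fun β hβ =>
    A.comm β hβ z hz x hx
  have hanti : AntitoneOn (fun β => A.op β z x) (Ioo 0 1) := by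
    intro β hβ β' hβ' hle
    simp only [hflip β hβ, hflip β' hβ']
    exact A.monotoneOn_op hMO hzx hx hz ⟨by linarith [hβ'.2], by linarith [hβ'.1]⟩
      ⟨by linarith [hβ.2], by linarith [hβ.1]⟩ (by linarith)
  have hz_eq : A.op (1 - α) z x = z := by rw [hflip _ hα', sub_sub_cancel, h]
  have hconst : ∀ β ∈ Ioo (0:ℝ) 1, A.op β z x = z := fun β hβ =>
    (hanti.dual_right.eq_of_map_mul_eq hα' (fun β hβ => by
      simp only [Function.comp_apply]
      rw [← A.op_op_right (Ioo_subset_Icc_self hα') hβ hz hx, hz_eq]) hβ hα').trans hz_eq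
  refine le_antisymm hzx (le_of_forall_sub_le fun ε hε => ?_)
  obtain ⟨p, hp, hlt⟩ := A.exists_sub_lt_op hLC hzx hx hz hε
  have hp' : 1 - p ∈ Ioo (0:ℝ) 1 := ⟨by linarith [hp.2], by linarith [hp.1]⟩
  rw [← sub_sub_cancel 1 p, ← hflip _ hp', hconst _ hp'] at hlt
  exact hlt.le

end Algebra

variable {A : UCA} {a b x y : ℝ}

lemma Eats.trans {z : ℝ} (hyx : A.Eats y x) (hxz : A.Eats x z)
    (hx : x ∈ Icc (0:ℝ) 1) (hy : y ∈ Icc (0:ℝ) 1) (hz : z ∈ Icc (0:ℝ) 1) :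
    A.Eats y z := by
  intro t ht
  rcases ht.2.eq_or_lt with rfl | ht1
  · exact A.proj1 y hy z hz
  have hhalf : (1/2 : ℝ) ∈ Ioo (0:ℝ) 1 := by norm_num
  have h := A.assoc (1/2) hhalf t ⟨ht.1, ht1⟩ y hy x hx z hz
  have hden : (0:ℝ) < 1 - 1/2 * t := by linarith
  rw [hyx (1/2) (Ioo_subset_Ioc_self hhalf),
    hxz _ ⟨div_pos (by linarith [ht.1]) hden, (div_le_one hden).2 (by linarith)⟩,
    hyx _ ⟨by linarith [ht.1], by linarith⟩] at h
  exact h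

lemma Delta.mem_Icc (hab : A.Delta a b) (hx : x ∈ Icc a b) : x ∈ Icc (0:ℝ) 1 :=
  ⟨hab.1.1.1.trans hx.1, hx.2.trans hab.2.1.1.2⟩

lemma Delta.not_eats (hab : A.Delta a b) (hy : y ∈ Ioo a b) : ¬ A.Eats y a :=
  fun h => hab.2.2.2.subset ⟨hy, hab.mem_Icc (Ioo_subset_Icc_self hy),
    h.trans hab.1.2 hab.1.1 (hab.mem_Icc (Ioo_subset_Icc_self hy)) ⟨le_rfl, zero_le_one⟩⟩

lemma op_lt_of_mem_gap (hMO : A.MO) (hab : A.Delta a b) {p : ℝ} (hy : y ∈ Ioo a b)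
    (hp : p ∈ Ico (0:ℝ) 1) : A.op p y a < y := by
  have ha := hab.1.1
  have hy' := hab.mem_Icc (Ioo_subset_Icc_self hy)
  rcases hp.1.eq_or_lt with rfl | hp0
  · rw [A.proj0 y hy' a ha]; exact hy.1
  exact (A.op_le_of_le hMO ⟨hp0, hp.2⟩ hy' ha hy.1.le).lt_of_ne fun h =>
    hab.not_eats hy (A.eats_of_op_eq_left hMO hy.1.le hy' ha ⟨hp0, hp.2⟩ h)

lemma strictMonoOn_op (hMO : A.MO) (hLC : A.LC) (hab : A.Delta a b)
    (hy : y ∈ Ioo a b) : StrictMonoOn (fun t => A.op t y a) (Ico 0 1) := by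
  intro s hs t ht hst
  have ha := hab.1.1
  have hy' := hab.mem_Icc (Ioo_subset_Icc_self hy)
  have hw := A.mem s (Ico_subset_Icc_self hs) y hy' a ha
  have hwy : A.op s y a < y := op_lt_of_mem_gap hMO hab hy hs
  have h1s : (0:ℝ) < 1 - s := by linarith [hs.2]
  have hα : (t - s) / (1 - s) ∈ Ioo (0:ℝ) 1 :=
    ⟨div_pos (by linarith) h1s, (div_lt_one h1s).2 (by linarith [ht.2])⟩
  have hcomb : A.op t y a = A.op ((t - s) / (1 - s)) y (A.op s y a) := by
    rw [A.op_op_left hα hs hy' ha]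
    congr 1
    field_simp
    ring
  simp only [hcomb]
  exact (A.le_op_of_le hMO hα hy' hw hwy.le).lt_of_ne fun h =>
    hwy.ne (A.eq_of_op_eq_right hMO hLC hwy.le hy' hw hα h.symm)

lemma le_op_of_mem_Ioc (hMO : A.MO) (hxy : x ≤ y) (hx : x ∈ Icc (0:ℝ) 1)
    (hy : y ∈ Icc (0:ℝ) 1) {p : ℝ} (hp : p ∈ Ioc (0:ℝ) 1) : x ≤ A.op p y x := by
  rcases hp.2.eq_or_lt with rfl | hp1
  · rwa [A.proj1 y hy x hx]
  · exact A.le_op_of_le hMO ⟨hp.1, hp1⟩ hy hx hxy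

lemma V_le_op (hMO : A.MO) (hxy : x ≤ y) (hx : x ∈ Icc (0:ℝ) 1) (hy : y ∈ Icc (0:ℝ) 1)
    {p : ℝ} (hp : p ∈ Ioc (0:ℝ) 1) : A.V x y ≤ A.op p y x :=
  csInf_le ⟨x, forall_mem_image.2 fun _ hq => le_op_of_mem_Ioc hMO hxy hx hy hq⟩
    (mem_image_of_mem _ hp)

lemma le_V (hMO : A.MO) (hxy : x ≤ y) (hx : x ∈ Icc (0:ℝ) 1) (hy : y ∈ Icc (0:ℝ) 1) :
    x ≤ A.V x y :=
  le_csInf ((nonempty_Ioc.2 (zero_lt_one (α := ℝ))).image _)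
    (forall_mem_image.2 fun _ hq => le_op_of_mem_Ioc hMO hxy hx hy hq)

lemma V_le (hMO : A.MO) (hxy : x ≤ y) (hx : x ∈ Icc (0:ℝ) 1) (hy : y ∈ Icc (0:ℝ) 1) :
    A.V x y ≤ y := by
  simpa only [A.proj1 y hy x hx] using
    V_le_op hMO hxy hx hy (right_mem_Ioc.2 (zero_lt_one (α := ℝ)))

lemma exists_op_lt_V_add {ε : ℝ} (hε : 0 < ε) :
    ∃ p ∈ Ioc (0:ℝ) 1, A.op p y x < A.V x y + ε := by
  obtain ⟨_, ⟨p, hp, rfl⟩, hlt⟩ := exists_lt_of_csInf_lt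
    ((nonempty_Ioc.2 (zero_lt_one (α := ℝ))).image _) (lt_add_of_pos_right _ hε)
  exact ⟨p, hp, hlt⟩

lemma V_le_op_add (hMO : A.MO) (hx0 : 0 ≤ x) (hxy : x ≤ y) (hy1 : y < 1) {t ε : ℝ}
    (ht : t ∈ Ioo (0:ℝ) 1) (hε : ε ∈ Ioo 0 (1 - y)) :
    A.V x y ≤ A.op t (A.V x y + ε) (x + ε) := by
  have hx : x ∈ Icc (0:ℝ) 1 := ⟨hx0, by linarith⟩
  have hy : y ∈ Icc (0:ℝ) 1 := ⟨hx0.trans hxy, hy1.le⟩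
  have hVε : A.V x y + ε ∈ Icc (0:ℝ) 1 :=
    ⟨by linarith [le_V hMO hxy hx hy, hε.1], by linarith [V_le hMO hxy hx hy, hε.2]⟩
  obtain ⟨p, hp, hlt⟩ := exists_op_lt_V_add (A := A) (x := x) (y := y) hε.1
  calc A.V x y ≤ A.op (p * t) y x :=
        V_le_op hMO hxy hx hy ⟨mul_pos hp.1 ht.1, by nlinarith [hp.2, ht.2, hp.1]⟩
    _ = A.op t (A.op p y x) x := (A.op_op_right (Ioc_subset_Icc_self hp) ht hy hx).symm
    _ ≤ A.op t (A.V x y + ε) x :=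
        hMO _ (A.mem p (Ioc_subset_Icc_self hp) y hy x hx) _ hVε x hx t ht hlt.le
    _ ≤ A.op t (A.V x y + ε) (x + ε) :=
        A.op_le_op_right hMO ht hVε hx ⟨by linarith [hε.1], by linarith [hε.2]⟩
          (by linarith [hε.1])

lemma eats_V (hMO : A.MO) (hUC : A.UC) (hx0 : 0 ≤ x) (hxy : x ≤ y) (hy1 : y < 1) :
    A.Eats (A.V x y) x := by
  have hx : x ∈ Icc (0:ℝ) 1 := ⟨hx0, by linarith⟩
  have hy : y ∈ Icc (0:ℝ) 1 := ⟨hx0.trans hxy, hy1.le⟩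
  have hV : A.V x y ∈ Icc (0:ℝ) 1 :=
    ⟨hx0.trans (le_V hMO hxy hx hy), (V_le hMO hxy hx hy).trans hy.2⟩
  intro t ht
  rcases ht.2.eq_or_lt with rfl | ht1
  · exact A.proj1 _ hV x hx
  have ht' : t ∈ Ioo (0:ℝ) 1 := ⟨ht.1, ht1⟩
  have hsmall : Ioo 0 (1 - y) ∈ 𝓝[>] (0:ℝ) := Ioo_mem_nhdsGT (by linarith)
  have hbdd : IsBoundedUnder (· ≤ ·) (𝓝[>] (0:ℝ)) fun ε => A.op t (A.V x y + ε) (x + ε) :=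
    isBoundedUnder_of_eventually_le (eventually_of_mem hsmall fun ε hε =>
      (A.op_mem ht' ⟨by linarith [hV.1, hε.1], by linarith [V_le hMO hxy hx hy, hε.2]⟩
        ⟨by linarith [hε.1], by linarith [hε.2]⟩).2)
  refine le_antisymm (A.op_le_of_le hMO ht' hV hx (le_V hMO hxy hx hy)) ?_
  refine le_trans ?_
    (hUC _ ⟨hV.1, (V_le hMO hxy hx hy).trans_lt hy1⟩ x ⟨hx0, by linarith⟩ t ht')
  exact le_limsup_of_frequently_le
    (eventually_of_mem hsmall fun ε hε => V_le_op_add hMO hx0 hxy hy1 ht' hε).frequently hbdd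

lemma V_eq_of_mem_gap (hMO : A.MO) (hUC : A.UC) (hLC : A.LC) (hab : A.Delta a b)
    (hx : x ∈ Ico a b) (hy : y ∈ Ico a b) (hxy : x ≤ y) : A.V x y = x := by
  have ha := hab.1.1
  have hx' := hab.mem_Icc (Ico_subset_Icc_self hx)
  have hy' := hab.mem_Icc (Ico_subset_Icc_self hy)
  refine ((le_V hMO hxy hx' hy').lt_or_eq.resolve_left fun hlt => ?_).symm
  set V := A.V x y
  have hV : V ∈ Ioo a b := ⟨hx.1.trans_lt hlt, (V_le hMO hxy hx' hy').trans_lt hy.2⟩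
  have hV' := hab.mem_Icc (Ioo_subset_Icc_self hV)
  obtain ⟨p, hp, hxw⟩ := A.exists_sub_lt_op hLC hV.1.le hV' ha (sub_pos.2 hlt)
  have hhalf : (1/2 : ℝ) ∈ Ioo (0:ℝ) 1 := by norm_num
  have hw := A.op_mem hp hV' ha
  -- `V ⊳ x` and `x < V ⊕_p a`, so `V = V ⊕_{1/2} x ≤ V ⊕_{1/2} (V ⊕_p a) = V ⊕_{(1+p)/2} a < V`
  have hle : V ≤ A.op (1/2) V (A.op p V a) := by
    calc V = A.op (1/2) V x :=
          (eats_V hMO hUC hx'.1 hxy (hy.2.trans_le hab.2.1.1.2) _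
            (Ioo_subset_Ioc_self hhalf)).symm
      _ ≤ A.op (1/2) V (A.op p V a) := A.op_le_op_right hMO hhalf hV' hx' hw (by linarith)
  rw [A.op_op_left hhalf (Ioo_subset_Ico_self hp) hV' ha] at hle
  exact hle.not_gt (op_lt_of_mem_gap hMO hab hV ⟨by linarith [hp.1], by linarith [hp.2]⟩)

lemma exists_op_lt_add (hMO : A.MO) (hUC : A.UC) (hLC : A.LC) (hab : A.Delta a b)
    (hx : x ∈ Ico a b) (hy : y ∈ Ico a b) (hxy : x ≤ y) {ε : ℝ} (hε : 0 < ε) :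
    ∃ p ∈ Ioo (0:ℝ) 1, A.op p y x < x + ε := by
  obtain ⟨p, hp, hlt⟩ := exists_op_lt_V_add (A := A) (x := x) (y := y) hε
  rw [V_eq_of_mem_gap hMO hUC hLC hab hx hy hxy] at hlt
  rcases hp.2.lt_or_eq with hp1 | rfl
  · exact ⟨p, ⟨hp.1, hp1⟩, hlt⟩
  have hx' := hab.mem_Icc (Ico_subset_Icc_self hx)
  have hy' := hab.mem_Icc (Ico_subset_Icc_self hy)
  rw [A.proj1 y hy' x hx'] at hlt
  exact ⟨1/2, by norm_num, (A.op_le_of_le hMO (by norm_num) hy' hx' hxy).trans_lt hlt⟩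

lemma exists_gt_op_lt (hMO : A.MO) (hUC : A.UC) (hLC : A.LC) (hab : A.Delta a b)
    (hy : y ∈ Ioo a b) {t v : ℝ} (ht : t ∈ Ico (0:ℝ) 1) (hv : A.op t y a < v) :
    ∃ γ ∈ Ioo t 1, A.op γ y a < v := by
  have ha := hab.1.1
  have hy' := hab.mem_Icc (Ioo_subset_Icc_self hy)
  have hwy := op_lt_of_mem_gap hMO hab hy ht
  have hw : A.op t y a ∈ Ico a b :=
    ⟨(A.proj0 y hy' a ha).symm.trans_le
      ((strictMonoOn_op hMO hLC hab hy).monotoneOn (left_mem_Ico.2 one_pos) ht ht.1),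
      hwy.trans hy.2⟩
  obtain ⟨p, hp, hpv⟩ := exists_op_lt_add hMO hUC hLC hab hw ⟨hy.1.le, hy.2⟩ hwy.le
    (sub_pos.2 hv)
  rw [add_sub_cancel, A.op_op_left hp ht hy' ha] at hpv
  exact ⟨p + t * (1 - p), ⟨by nlinarith [hp.1, ht.2],
    by nlinarith [mul_pos (sub_pos.2 hp.2) (sub_pos.2 ht.2)]⟩, hpv⟩

lemma exists_lt_forall_lt_op (hMO : A.MO) (hUC : A.UC) (hLC : A.LC) (hab : A.Delta a b)
    (hy : y ∈ Ioo a b) {t v : ℝ} (ht : t ∈ Ico (0:ℝ) 1) (hv : v ∈ Ico a y)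
    (hvt : v < A.op t y a) : ∃ s < t, ∀ t' ∈ Ico (0:ℝ) 1, s < t' → v < A.op t' y a := by
  have ha := hab.1.1
  have hy' := hab.mem_Icc (Ioo_subset_Icc_self hy)
  obtain ⟨p, hp, hpv⟩ := exists_op_lt_add hMO hUC hLC hab ⟨hv.1, hv.2.trans hy.2⟩
    ⟨hy.1.le, hy.2⟩ hv.2.le (sub_pos.2 hvt)
  rw [add_sub_cancel] at hpv
  have h1p : 0 < 1 - p := by linarith [hp.2]
  refine ⟨(t - p) / (1 - p), by rw [div_lt_iff₀ h1p]; nlinarith [hp.1, ht.2],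
    fun t' ht' hlt => lt_of_not_ge fun hle => ?_⟩
  rw [div_lt_iff₀ h1p] at hlt
  -- `y ⊕_t a ≤ y ⊕_{p + t'(1 - p)} a = y ⊕_p (y ⊕_{t'} a) ≤ y ⊕_p v < y ⊕_t a`
  have hγ : p + t' * (1 - p) ∈ Ico (0:ℝ) 1 :=
    ⟨by nlinarith [hp.1, ht'.1], by nlinarith [mul_pos h1p (sub_pos.2 ht'.2)]⟩
  have hmono := (strictMonoOn_op hMO hLC hab hy).monotoneOn ht hγ (by linarith)
  change A.op t y a ≤ A.op (p + t' * (1 - p)) y a at hmono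
  rw [← A.op_op_left hp ht' hy' ha] at hmono
  have := A.op_le_op_right hMO hp hy' (A.mem t' (Ico_subset_Icc_self ht') y hy' a ha)
    ⟨ha.1.trans hv.1, hv.2.le.trans hy'.2⟩ hle
  linarith

lemma surjOn_op (hMO : A.MO) (hUC : A.UC) (hLC : A.LC) (hab : A.Delta a b)
    (hy : y ∈ Ioo a b) : SurjOn (fun t => A.op t y a) (Ico 0 1) (Ico a y) := by
  intro v hv
  have ha := hab.1.1
  have hy' := hab.mem_Icc (Ioo_subset_Icc_self hy)
  have hf := strictMonoOn_op hMO hLC hab hy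
  set S := {t ∈ Ico (0:ℝ) 1 | A.op t y a ≤ v}
  have h0S : (0:ℝ) ∈ S := ⟨left_mem_Ico.2 one_pos, by rw [A.proj0 y hy' a ha]; exact hv.1⟩
  obtain ⟨s₀, hs₀, hvs₀⟩ := A.exists_sub_lt_op hLC hy.1.le hy' ha (sub_pos.2 hv.2)
  have hS : ∀ t ∈ S, t < s₀ := fun t ht =>
    (hf.lt_iff_lt ht.1 (Ioo_subset_Ico_self hs₀)).1
      (by show A.op t y a < A.op s₀ y a; linarith [ht.2])
  have hbdd : BddAbove S := ⟨s₀, fun t ht => (hS t ht).le⟩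
  have ht₀ : sSup S ∈ Ico (0:ℝ) 1 :=
    ⟨le_csSup hbdd h0S, (csSup_le ⟨0, h0S⟩ fun t ht => (hS t ht).le).trans_lt hs₀.2⟩
  refine ⟨sSup S, ht₀, le_antisymm (not_lt.1 fun hlt => ?_) (not_lt.1 fun hlt => ?_)⟩
  · obtain ⟨s, hs, hlt_s⟩ := exists_lt_forall_lt_op hMO hUC hLC hab hy ht₀ hv hlt
    obtain ⟨t, htS, hst⟩ := exists_lt_of_lt_csSup ⟨0, h0S⟩ hs
    exact (hlt_s t htS.1 hst).not_ge htS.2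
  · obtain ⟨γ, hγ, hγv⟩ := exists_gt_op_lt hMO hUC hLC hab hy ht₀ hlt
    exact (le_csSup hbdd ⟨⟨ht₀.1.trans hγ.1.le, hγ.2⟩, hγv.le⟩).not_gt hγ.1

section Isomorphisms

variable {τ T : ENNReal} {Φ Θ : ℝ → ℝ}

lemma IsTauIso.bijOn_invFunOn (hΦ : A.IsTauIso a b τ Φ) :
    BijOn (Function.invFunOn Φ (tauSet τ)) (Ico a b) (tauSet τ) :=
  BijOn.symm hΦ.1.invOn_invFunOn.symm hΦ.1

lemma IsTauIso.invFunOn_op (hΦ : A.IsTauIso a b τ Φ) {p : ℝ} (hp : p ∈ Ioo (0:ℝ) 1)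
    (hx : x ∈ Ico a b) (hy : y ∈ Ico a b) :
    Function.invFunOn Φ (tauSet τ) (A.op p x y) =
      p * Function.invFunOn Φ (tauSet τ) x + (1 - p) * Function.invFunOn Φ (tauSet τ) y := by
  have hinv := hΦ.1.invOn_invFunOn
  have hs := hΦ.bijOn_invFunOn.mapsTo hx
  have ht := hΦ.bijOn_invFunOn.mapsTo hy
  conv_lhs => rw [← hinv.2 hx, ← hinv.2 hy, ← hΦ.2 p hp _ hs _ ht]
  exact hinv.1 (comb_mem_tauSet hp hs ht)

lemma isTauIso_invFunOn
    (hclosed : ∀ p ∈ Ioo (0:ℝ) 1, ∀ x ∈ Ico a b, ∀ y ∈ Ico a b, A.op p x y ∈ Ico a b)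
    (hΘ : BijOn Θ (Ico a b) (tauSet τ))
    (hhom : ∀ p ∈ Ioo (0:ℝ) 1, ∀ x ∈ Ico a b, ∀ y ∈ Ico a b,
      Θ (A.op p x y) = p * Θ x + (1 - p) * Θ y) :
    A.IsTauIso a b τ (Function.invFunOn Θ (Ico a b)) := by
  have hinv := hΘ.invOn_invFunOn
  have hbij : BijOn (Function.invFunOn Θ (Ico a b)) (tauSet τ) (Ico a b) :=
    BijOn.symm hinv.symm hΘ
  refine ⟨hbij, fun p hp s hs t ht => ?_⟩
  have hs' := hbij.mapsTo hs
  have ht' := hbij.mapsTo ht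
  apply hΘ.injOn (hbij.mapsTo (comb_mem_tauSet hp hs ht)) (hclosed p hp _ hs' _ ht')
  rw [hinv.2 (comb_mem_tauSet hp hs ht), hhom p hp _ hs' _ ht', hinv.2 hs, hinv.2 ht]

lemma IsTauIso.comp_mul {κ : ℝ} (hκ : 0 < κ) (hΦ : A.IsTauIso a b (ENNReal.ofReal κ * τ) Φ) :
    A.IsTauIso a b τ (fun s => Φ (κ * s)) := by
  have hmul : BijOn (κ * ·) (tauSet τ) (tauSet (ENNReal.ofReal κ * τ)) :=
    image_mul_tauSet hκ τ ▸ (mul_right_injective₀ hκ.ne').injOn.bijOn_image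
  refine ⟨hΦ.1.comp hmul, fun p hp s hs t ht => ?_⟩
  dsimp only
  rw [show κ * (p * s + (1 - p) * t) = p * (κ * s) + (1 - p) * (κ * t) by ring]
  exact hΦ.2 p hp _ (hmul.mapsTo hs) _ (hmul.mapsTo ht)

lemma IsTauIso.exists_comp_eq_mul (hΘ : Θ '' Ico a b = tauSet T)
    (hhom : ∀ p ∈ Ioo (0:ℝ) 1, ∀ x ∈ Ico a b, ∀ y ∈ Ico a b,
      Θ (A.op p x y) = p * Θ x + (1 - p) * Θ y)
    (hτ : τ ≠ 0) (hΦ : A.IsTauIso a b τ Φ) :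
    ∃ κ > 0, (∀ s ∈ tauSet τ, Θ (Φ s) = κ * s) ∧ T = ENNReal.ofReal κ * τ := by
  have himage : (Θ ∘ Φ) '' tauSet τ = tauSet T := by rw [image_comp, hΦ.1.image_eq, hΘ]
  obtain ⟨κ, hκ, heq⟩ := exists_eq_mul_of_comb hτ himage fun p hp s hs t ht => by
    simp only [Function.comp_apply]
    rw [hΦ.2 p hp s hs t ht, hhom p hp _ (hΦ.1.mapsTo hs) _ (hΦ.1.mapsTo ht)]
  refine ⟨κ, hκ, heq, tauSet_injective ?_⟩
  rw [← image_mul_tauSet hκ, ← himage]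
  exact EqOn.image_eq (f₁ := Θ ∘ Φ) heq

lemma IsTauIso.strictMonoOn (hΘmono : StrictMonoOn Θ (Ico a b)) (hΘ : Θ '' Ico a b = tauSet T)
    (hhom : ∀ p ∈ Ioo (0:ℝ) 1, ∀ x ∈ Ico a b, ∀ y ∈ Ico a b,
      Θ (A.op p x y) = p * Θ x + (1 - p) * Θ y)
    (hτ : τ ≠ 0) (hΦ : A.IsTauIso a b τ Φ) : StrictMonoOn Φ (tauSet τ) := by
  obtain ⟨κ, hκ, heq, -⟩ := hΦ.exists_comp_eq_mul hΘ hhom hτ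
  intro s hs t ht hst
  rw [← hΘmono.lt_iff_lt (hΦ.1.mapsTo hs) (hΦ.1.mapsTo ht), heq s hs, heq t ht]
  exact mul_lt_mul_of_pos_left hst hκ

lemma IsTauIso.eqOn (hΘinj : InjOn Θ (Ico a b)) (hΘ : Θ '' Ico a b = tauSet T)
    (hhom : ∀ p ∈ Ioo (0:ℝ) 1, ∀ x ∈ Ico a b, ∀ y ∈ Ico a b,
      Θ (A.op p x y) = p * Θ x + (1 - p) * Θ y)
    (hτ0 : τ ≠ 0) (hτ : τ ≠ ⊤) (hΦ : A.IsTauIso a b τ Φ) {Φ' : ℝ → ℝ}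
    (hΦ' : A.IsTauIso a b τ Φ') : EqOn Φ Φ' (tauSet τ) := by
  obtain ⟨κ, hκ, heq, hT⟩ := hΦ.exists_comp_eq_mul hΘ hhom hτ0
  obtain ⟨κ', hκ', heq', hT'⟩ := hΦ'.exists_comp_eq_mul hΘ hhom hτ0
  have hκκ' : κ = κ' := (ENNReal.ofReal_eq_ofReal_iff hκ.le hκ'.le).1
    ((ENNReal.mul_left_inj hτ0 hτ).1 (hT.symm.trans hT'))
  intro s hs
  exact hΘinj (hΦ.1.mapsTo hs) (hΦ'.1.mapsTo hs) (by rw [heq s hs, heq' s hs, hκκ'])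

end Isomorphisms

lemma isTauIso_op (hMO : A.MO) (hUC : A.UC) (hLC : A.LC) (hab : A.Delta a b)
    (hy : y ∈ Ioo a b) : A.IsTauIso a y 1 (fun t => A.op t y a) := by
  have ha := hab.1.1
  have hy' := hab.mem_Icc (Ioo_subset_Icc_self hy)
  have hf := strictMonoOn_op hMO hLC hab hy
  refine ⟨tauSet_one ▸ ⟨fun t ht => ⟨?_, op_lt_of_mem_gap hMO hab hy ht⟩, hf.injOn,
    surjOn_op hMO hUC hLC hab hy⟩, fun p hp s hs t ht => ?_⟩
  · exact (A.proj0 y hy' a ha).symm.trans_le (hf.monotoneOn (left_mem_Ico.2 one_pos) ht ht.1)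
  · rw [tauSet_one] at hs ht
    exact (A.op_op_op hp hs ht hy' ha).symm

noncomputable def coord (A : UCA) (a y : ℝ) : ℝ → ℝ :=
  Function.invFunOn (fun t => A.op t y a) (tauSet 1)

lemma coord_op_left (hMO : A.MO) (hUC : A.UC) (hLC : A.LC) (hab : A.Delta a b)
    (hy : y ∈ Ioo a b) {t : ℝ} (ht : t ∈ Ico (0:ℝ) 1) : A.coord a y (A.op t y a) = t :=
  (isTauIso_op hMO hUC hLC hab hy).1.invOn_invFunOn.1 (tauSet_one ▸ ht)

lemma op_coord (hMO : A.MO) (hUC : A.UC) (hLC : A.LC) (hab : A.Delta a b)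
    (hy : y ∈ Ioo a b) (hx : x ∈ Ico a y) : A.op (A.coord a y x) y a = x :=
  (isTauIso_op hMO hUC hLC hab hy).1.invOn_invFunOn.2 hx

lemma coord_mem (hMO : A.MO) (hUC : A.UC) (hLC : A.LC) (hab : A.Delta a b)
    (hy : y ∈ Ioo a b) (hx : x ∈ Ico a y) : A.coord a y x ∈ Ico (0:ℝ) 1 :=
  tauSet_one ▸ (isTauIso_op hMO hUC hLC hab hy).bijOn_invFunOn.mapsTo hx

lemma coord_self (hMO : A.MO) (hUC : A.UC) (hLC : A.LC) (hab : A.Delta a b)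
    (hy : y ∈ Ioo a b) : A.coord a y a = 0 := by
  have ha := hab.1.1
  have hy' := hab.mem_Icc (Ioo_subset_Icc_self hy)
  simpa only [A.proj0 y hy' a ha] using
    coord_op_left hMO hUC hLC hab hy (left_mem_Ico.2 (zero_lt_one (α := ℝ)))

lemma coord_op (hMO : A.MO) (hUC : A.UC) (hLC : A.LC) (hab : A.Delta a b)
    (hy : y ∈ Ioo a b) {p x' : ℝ} (hp : p ∈ Ioo (0:ℝ) 1) (hx : x ∈ Ico a y)
    (hx' : x' ∈ Ico a y) :
    A.coord a y (A.op p x x') = p * A.coord a y x + (1 - p) * A.coord a y x' :=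
  (isTauIso_op hMO hUC hLC hab hy).invFunOn_op hp hx hx'

lemma coord_strictMonoOn (hMO : A.MO) (hUC : A.UC) (hLC : A.LC) (hab : A.Delta a b)
    (hy : y ∈ Ioo a b) : StrictMonoOn (A.coord a y) (Ico a y) := by
  intro x hx x' hx' hxx'
  have hf := strictMonoOn_op hMO hLC hab hy
  rw [← hf.lt_iff_lt (coord_mem hMO hUC hLC hab hy hx) (coord_mem hMO hUC hLC hab hy hx')]
  simpa only [op_coord hMO hUC hLC hab hy hx, op_coord hMO hUC hLC hab hy hx'] using hxx'

lemma coord_pos (hMO : A.MO) (hUC : A.UC) (hLC : A.LC) (hab : A.Delta a b)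
    (hy : y ∈ Ioo a b) (hx : x ∈ Ioo a y) : 0 < A.coord a y x := by
  rw [← coord_self hMO hUC hLC hab hy]
  exact coord_strictMonoOn hMO hUC hLC hab hy (left_mem_Ico.2 hy.1) (Ioo_subset_Ico_self hx)
    hx.1

lemma coord_eq_mul (hMO : A.MO) (hUC : A.UC) (hLC : A.LC) (hab : A.Delta a b)
    {y' : ℝ} (hy : y ∈ Ioo a b) (hy' : y' ∈ Ioo a b) (hyy' : y < y') (hx : x ∈ Ico a y) :
    A.coord a y' x = A.coord a y' y * A.coord a y x := by
  rcases hx.1.eq_or_lt with rfl | hax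
  · rw [coord_self hMO hUC hLC hab hy, coord_self hMO hUC hLC hab hy', mul_zero]
  have ha := hab.1.1
  have hr := coord_mem hMO hUC hLC hab hy' ⟨hy.1.le, hyy'⟩
  have ht : A.coord a y x ∈ Ioo (0:ℝ) 1 :=
    ⟨coord_pos hMO hUC hLC hab hy ⟨hax, hx.2⟩, (coord_mem hMO hUC hLC hab hy hx).2⟩
  have hx_eq : A.op (A.coord a y x) (A.op (A.coord a y' y) y' a) a = x := by
    rw [op_coord hMO hUC hLC hab hy' ⟨hy.1.le, hyy'⟩, op_coord hMO hUC hLC hab hy hx]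
  calc A.coord a y' x
      = A.coord a y' (A.op (A.coord a y' y * A.coord a y x) y' a) := by
        rw [← A.op_op_right (Ico_subset_Icc_self hr) ht
          (hab.mem_Icc (Ioo_subset_Icc_self hy')) ha, hx_eq]
    _ = A.coord a y' y * A.coord a y x :=
        coord_op_left hMO hUC hLC hab hy' ⟨mul_nonneg hr.1 ht.1.le,
          by nlinarith [hr.1, hr.2, ht.1, ht.2]⟩

lemma coord_div_coord_of_lt (hMO : A.MO) (hUC : A.UC) (hLC : A.LC) (hab : A.Delta a b)
    {y' m : ℝ} (hy : y ∈ Ioo a b) (hy' : y' ∈ Ioo a b) (hyy' : y < y') (hx : x ∈ Ico a y)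
    (hm : m ∈ Ioo a y) :
    A.coord a y' x / A.coord a y' m = A.coord a y x / A.coord a y m := by
  rw [coord_eq_mul hMO hUC hLC hab hy hy' hyy' hx,
    coord_eq_mul hMO hUC hLC hab hy hy' hyy' (Ioo_subset_Ico_self hm),
    mul_div_mul_left _ _ (coord_pos hMO hUC hLC hab hy' ⟨hy.1, hyy'⟩).ne']

/-- The coordinates `coord a y` agree up to a factor (`coord_eq_mul`), so the ratio with the
value at the midpoint does not depend on the reference point `y > max x ((a + b) / 2)`
(`gapCoord_eq`); the definition just picks one. -/
noncomputable def gapCoord (A : UCA) (a b x : ℝ) : ℝ :=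
  A.coord a ((max x ((a + b) / 2) + b) / 2) x /
    A.coord a ((max x ((a + b) / 2) + b) / 2) ((a + b) / 2)

lemma gapCoord_eq (hMO : A.MO) (hUC : A.UC) (hLC : A.LC) (hab : A.Delta a b)
    (hy : y ∈ Ioo a b) (hx : x ∈ Ico a y) (hm : (a + b) / 2 < y) :
    A.gapCoord a b x = A.coord a y x / A.coord a y ((a + b) / 2) := by
  have hma : a < (a + b) / 2 := by linarith [hab.2.2.1]
  have h1 := le_max_left x ((a + b) / 2)
  have h2 := le_max_right x ((a + b) / 2)
  have h3 : max x ((a + b) / 2) < b := max_lt (hx.2.trans hy.2) (by linarith [hab.2.2.1])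
  set Y := (max x ((a + b) / 2) + b) / 2 with hYdef
  have hY : Y ∈ Ioo a b := ⟨by linarith, by linarith⟩
  rcases lt_trichotomy Y y with h | rfl | h
  · exact (coord_div_coord_of_lt hMO hUC hLC hab hY hy h ⟨hx.1, by linarith⟩
      ⟨hma, by linarith⟩).symm
  · rfl
  · exact coord_div_coord_of_lt hMO hUC hLC hab hy hY h hx ⟨hma, hm⟩

lemma gapCoord_self (hMO : A.MO) (hUC : A.UC) (hLC : A.LC) (hab : A.Delta a b) :
    A.gapCoord a b a = 0 := by
  obtain ⟨y, hy, hay, hmy⟩ := exists_mem_Ioo_gt (left_mem_Ico.2 hab.2.2.1)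
  rw [gapCoord_eq hMO hUC hLC hab hy (left_mem_Ico.2 hay) hmy, coord_self hMO hUC hLC hab hy,
    zero_div]

lemma gapCoord_op (hMO : A.MO) (hUC : A.UC) (hLC : A.LC) (hab : A.Delta a b)
    {p x' : ℝ} (hp : p ∈ Ioo (0:ℝ) 1) (hx : x ∈ Ico a b) (hx' : x' ∈ Ico a b) :
    A.gapCoord a b (A.op p x x') = p * A.gapCoord a b x + (1 - p) * A.gapCoord a b x' := by
  obtain ⟨y, hy, hxy, hmy⟩ :=
    exists_mem_Ioo_gt ⟨hx.1.trans (le_max_left x x'), max_lt hx.2 hx'.2⟩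
  have hxy' : x ∈ Ico a y := ⟨hx.1, (le_max_left _ _).trans_lt hxy⟩
  have hx'y' : x' ∈ Ico a y := ⟨hx'.1, (le_max_right _ _).trans_lt hxy⟩
  have hop : A.op p x x' ∈ Ico a y :=
    A.op_mem_Ico hMO hab.1.1.1 (hab.mem_Icc (Ioo_subset_Icc_self hy)).2 hp hxy' hx'y'
  rw [gapCoord_eq hMO hUC hLC hab hy hop hmy, gapCoord_eq hMO hUC hLC hab hy hxy' hmy,
    gapCoord_eq hMO hUC hLC hab hy hx'y' hmy, coord_op hMO hUC hLC hab hy hp hxy' hx'y']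
  ring

lemma gapCoord_strictMonoOn (hMO : A.MO) (hUC : A.UC) (hLC : A.LC) (hab : A.Delta a b) :
    StrictMonoOn (A.gapCoord a b) (Ico a b) := by
  intro x hx x' hx' hxx'
  obtain ⟨y, hy, hxy, hmy⟩ := exists_mem_Ioo_gt hx'
  have hx_y : x ∈ Ico a y := ⟨hx.1, hxx'.trans hxy⟩
  rw [gapCoord_eq hMO hUC hLC hab hy hx_y hmy, gapCoord_eq hMO hUC hLC hab hy ⟨hx'.1, hxy⟩ hmy]
  exact div_lt_div_of_pos_right (coord_strictMonoOn hMO hUC hLC hab hy hx_y ⟨hx'.1, hxy⟩ hxx')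
    (coord_pos hMO hUC hLC hab hy ⟨by linarith [hab.2.2.1], hmy⟩)

lemma exists_image_gapCoord_eq_tauSet (hMO : A.MO) (hUC : A.UC) (hLC : A.LC)
    (hab : A.Delta a b) : ∃ T, A.gapCoord a b '' Ico a b = tauSet T := by
  have hmono := gapCoord_strictMonoOn hMO hUC hLC hab
  have ha : a ∈ Ico a b := left_mem_Ico.2 hab.2.2.1
  have h0 := gapCoord_self hMO hUC hLC hab
  apply exists_tauSet_eq
  · rintro _ ⟨x, hx, rfl⟩
    exact h0 ▸ hmono.monotoneOn ha hx hx.1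
  · rintro _ ⟨x, hx, rfl⟩ r hr0 hr
    rcases hr0.eq_or_lt with rfl | hrpos
    · exact ⟨a, ha, h0⟩
    have hpos : 0 < A.gapCoord a b x := hrpos.trans hr
    have hp : r / A.gapCoord a b x ∈ Ioo (0:ℝ) 1 :=
      ⟨div_pos hrpos hpos, (div_lt_one hpos).2 hr⟩
    refine ⟨A.op (r / A.gapCoord a b x) x a,
      A.op_mem_Ico hMO hab.1.1.1 hab.2.1.1.2 hp hx ha, ?_⟩
    rw [gapCoord_op hMO hUC hLC hab hp hx ha, h0, mul_zero, add_zero,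
      div_mul_cancel₀ _ hpos.ne']
  · rintro _ ⟨x, hx, rfl⟩
    have hmid : (x + b) / 2 ∈ Ico a b := ⟨by linarith [hx.1, hx.2], by linarith [hx.2]⟩
    exact ⟨_, mem_image_of_mem _ hmid, hmono hx hmid (by linarith [hx.2])⟩

end UCA

/-- Theorem 3.7(ii): let `⟨[0,1], ⊕_p⟩` be a convex algebra satisfying (MO), (UC), (LC)
and `(a,b) ∈ Δ^⊕`.  Then there is a unique `τ ∈ {1, ∞}` such that `[a,b)` is closed
under the operations `⊕_p` and `⟨[a,b), ⊕_p⟩` is isomorphic to `⟨[0,τ), +_p⟩`.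
Moreover every such isomorphism is strictly increasing, and for `τ = 1` the
isomorphism is unique. -/
theorem stmt_16 (A : UCA) (hMO : A.MO) (hUC : A.UC) (hLC : A.LC)
    (a b : ℝ) (hab : A.Delta a b) :
    ∃ τ ∈ ({1, ⊤} : Set ENNReal),
      ((∀ p ∈ Set.Ioo (0:ℝ) 1, ∀ x ∈ Set.Ico a b, ∀ y ∈ Set.Ico a b,
          A.op p x y ∈ Set.Ico a b) ∧
        ∃ Φ : ℝ → ℝ, A.IsTauIso a b τ Φ) ∧
      (∀ τ' ∈ ({1, ⊤} : Set ENNReal), (∃ Φ : ℝ → ℝ, A.IsTauIso a b τ' Φ) → τ' = τ) ∧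
      (∀ Φ : ℝ → ℝ, A.IsTauIso a b τ Φ → StrictMonoOn Φ (tauSet τ)) ∧
      (τ = 1 → ∀ Φ Φ' : ℝ → ℝ, A.IsTauIso a b 1 Φ → A.IsTauIso a b 1 Φ' →
        Set.EqOn Φ Φ' (tauSet 1)) := by
  have hclosed : ∀ p ∈ Ioo (0:ℝ) 1, ∀ x ∈ Ico a b, ∀ y ∈ Ico a b, A.op p x y ∈ Ico a b :=
    fun p hp x hx y hy => A.op_mem_Ico hMO hab.1.1.1 hab.2.1.1.2 hp hx hy
  have hmono := UCA.gapCoord_strictMonoOn hMO hUC hLC hab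
  have hhom : ∀ p ∈ Ioo (0:ℝ) 1, ∀ x ∈ Ico a b, ∀ y ∈ Ico a b,
      A.gapCoord a b (A.op p x y) = p * A.gapCoord a b x + (1 - p) * A.gapCoord a b y :=
    fun p hp x hx y hy => UCA.gapCoord_op hMO hUC hLC hab hp hx hy
  obtain ⟨T, hT⟩ := UCA.exists_image_gapCoord_eq_tauSet hMO hUC hLC hab
  have hT0 : T ≠ 0 :=
    ne_zero_of_mem_tauSet (hT ▸ mem_image_of_mem _ (left_mem_Ico.2 hab.2.2.1))
  have hiso := UCA.isTauIso_invFunOn hclosed (hT ▸ hmono.injOn.bijOn_image) hhom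
  have hτ0 : ∀ τ ∈ ({1, ⊤} : Set ENNReal), τ ≠ 0 := by rintro τ (rfl | rfl) <;> simp
  have hmem : (if T = ⊤ then ⊤ else 1) ∈ ({1, ⊤} : Set ENNReal) := by split_ifs <;> simp
  refine ⟨_, hmem, ⟨hclosed, ?_⟩, ?_,
    fun Φ hΦ => hΦ.strictMonoOn hmono hT hhom (hτ0 _ hmem),
    fun _ Φ Φ' hΦ hΦ' => hΦ.eqOn hmono.injOn hT hhom one_ne_zero ENNReal.one_ne_top hΦ'⟩
  · split_ifs with hT_top
    · exact ⟨_, hT_top ▸ hiso⟩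
    · exact ⟨_, UCA.IsTauIso.comp_mul (ENNReal.toReal_pos hT0 hT_top)
        (by rwa [mul_one, ENNReal.ofReal_toReal hT_top])⟩
  · rintro τ' hτ' ⟨Φ, hΦ⟩
    obtain ⟨κ, hκ, -, rfl⟩ := hΦ.exists_comp_eq_mul hT hhom (hτ0 τ' hτ')
    rcases hτ' with rfl | rfl
    · simp
    · simp [ENNReal.mul_top, hκ]
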